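/- arXiv:1502.06878 — 4 statements merged into one kernel-verified Lean document; each statement's English description precedes it below -/
import Mathlib

section
/- Let Γ*, Q*, U* : ℝ≥0 × ℝ≥0 → ℝ be functions with U*(ξ₁, ξ₂) > 0 for all ξ₁, ξ₂, and suppose that for all ξ₁, ξ₂, ξ₁', ξ₂' the optimality inequality (Γ*(ξ₁,ξ₂) + ξ₁ Q*(ξ₁,ξ₂) + ξ₂)/U*(ξ₁,ξ₂) ≤ (Γ*(ξ₁',ξ₂') + ξ₁ Q*(ξ₁',ξ₂') + ξ₂)/U*(ξ₁',ξ₂') holds. Then for any ξ₁ ≥ 0, ξ₂ ≥ 0 and κ > 0, one has Q*(ξ₁+κ, ξ₂)/U*(ξ₁+κ, ξ₂) ≤ Q*(ξ₁, ξ₂)/U*(ξ₁, ξ₂); that is, the mean outage per step under the optimal policy is nonincreasing in the outage multiplier ξ_out. -/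
open scoped NNReal

/-- if `π*(ξ₁,ξ₂)` is optimal for the Lagrangian average cost per step,
then the mean outage per step is nonincreasing in the outage multiplier. -/
theorem stmt1 (Γ Q U : ℝ≥0 → ℝ≥0 → ℝ)
    (hU : ∀ ξ₁ ξ₂ : ℝ≥0, 0 < U ξ₁ ξ₂)
    (hopt : ∀ ξ₁ ξ₂ ξ₁' ξ₂' : ℝ≥0,
      (Γ ξ₁ ξ₂ + (ξ₁ : ℝ) * Q ξ₁ ξ₂ + (ξ₂ : ℝ)) / U ξ₁ ξ₂ ≤
      (Γ ξ₁' ξ₂' + (ξ₁ : ℝ) * Q ξ₁' ξ₂' + (ξ₂ : ℝ)) / U ξ₁' ξ₂')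
    (ξ₁ ξ₂ κ : ℝ≥0) (hκ : 0 < κ) :
    Q (ξ₁ + κ) ξ₂ / U (ξ₁ + κ) ξ₂ ≤ Q ξ₁ ξ₂ / U ξ₁ ξ₂ := by
  have h1 := hopt ξ₁ ξ₂ (ξ₁ + κ) ξ₂
  have h2 := hopt (ξ₁ + κ) ξ₂ ξ₁ ξ₂
  have hUA := hU ξ₁ ξ₂
  have hUB := hU (ξ₁ + κ) ξ₂
  have hκR : (0:ℝ) < (κ:ℝ) := by exact_mod_cast hκ
  have hsum := add_le_add h1 h2
  rw [div_add_div _ _ (ne_of_gt hUA) (ne_of_gt hUB),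
      div_add_div _ _ (ne_of_gt hUB) (ne_of_gt hUA)] at hsum
  have key : (κ:ℝ) * Q (ξ₁ + κ) ξ₂ / U (ξ₁ + κ) ξ₂ ≤
      (κ:ℝ) * Q ξ₁ ξ₂ / U ξ₁ ξ₂ := by
    rw [div_le_div_iff₀ hUB hUA]
    rw [div_le_div_iff₀ (mul_pos hUA hUB) (mul_pos hUB hUA)] at hsum
    push_cast at hsum ⊢
    nlinarith [hsum, mul_pos hUA hUB]
  rw [mul_div_assoc, mul_div_assoc] at key
  exact le_of_mul_le_mul_left key hκR
end

section
/- Let Γ*, Q*, U* : ℝ≥0 × ℝ≥0 → ℝ with U* > 0 satisfy, for all pairs of arguments, (Γ*(ξ₁,ξ₂) + ξ₁ Q*(ξ₁,ξ₂) + ξ₂)/U*(ξ₁,ξ₂) ≤ (Γ*(ξ₁',ξ₂') + ξ₁ Q*(ξ₁',ξ₂') + ξ₂)/U*(ξ₁',ξ₂'). Then for any ξ₁ ≥ 0, ξ₂ ≥ 0 and κ > 0, 1/U*(ξ₁, ξ₂+κ) ≤ 1/U*(ξ₁, ξ₂); i.e., the mean number of relays per step under the optimal policy is nonincreasing in the relay-cost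 multiplier ξ_relay. -/
open scoped NNReal

/-- if `π*(ξ₁,ξ₂)` is optimal for the Lagrangian average cost per step,
then the mean number of relays per step is nonincreasing in the relay-cost multiplier. -/
theorem stmt2 (Γ Q U : ℝ≥0 → ℝ≥0 → ℝ)
    (hU : ∀ ξ₁ ξ₂ : ℝ≥0, 0 < U ξ₁ ξ₂)
    (hopt : ∀ ξ₁ ξ₂ ξ₁' ξ₂' : ℝ≥0,
      (Γ ξ₁ ξ₂ + (ξ₁ : ℝ) * Q ξ₁ ξ₂ + (ξ₂ : ℝ)) / U ξ₁ ξ₂ ≤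
      (Γ ξ₁' ξ₂' + (ξ₁ : ℝ) * Q ξ₁' ξ₂' + (ξ₂ : ℝ)) / U ξ₁' ξ₂')
    (ξ₁ ξ₂ κ : ℝ≥0) (hκ : 0 < κ) :
    1 / U ξ₁ (ξ₂ + κ) ≤ 1 / U ξ₁ ξ₂ := by
  have hu := hU ξ₁ ξ₂
  have hv := hU ξ₁ (ξ₂ + κ)
  have h1 := hopt ξ₁ ξ₂ ξ₁ (ξ₂ + κ)
  have h2 := hopt ξ₁ (ξ₂ + κ) ξ₁ ξ₂
  rw [div_le_div_iff₀ hu hv] at h1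
  rw [div_le_div_iff₀ hv hu] at h2
  push_cast at h1 h2
  have hκ' : (0:ℝ) < κ := by exact_mod_cast hκ
  have huv : U ξ₁ ξ₂ ≤ U ξ₁ (ξ₂ + κ) := by nlinarith
  exact one_div_le_one_div_of_le hu huv
end

section
/- Let G : ℝ≥0 × ℝ≥0 → ℝ be defined as G(ξ₁, ξ₂) = inf_{π ∈ Π} ( g_π + ξ₁ h_π + ξ₂ k_π ), where for each π ∈ Π the reals g_π, h_π, k_π are fixed. Suppose the infimum is attained at some π*(ξ₁, ξ₂) for every (ξ₁, ξ₂), and that the maps (ξ₁, ξ₂) ↦ h_{π*(ξ₁,ξ₂)} and (ξ₁, ξ₂) ↦ k_{π*(ξ₁,ξ₂)} are continuous. Then G is concave, and G is differentiable everywhere with ∂G/∂ξ₁ (ξ₁, ξ₂) = h_{π*(ξ₁,ξ₂)} and ∂G/∂ξ₂ (ξ₁, ξ₂) = k_{π*(ξ₁,ξ₂)}; in particular G is continuously differentiable. -/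
/-!
Each `π` gives an affine function `ξ ↦ g π + ξ₁ h π + ξ₂ k π` lying above `G` and touching it
where `π` is optimal, so `G` is concave. Comparing `G` at `p` and `q` with the functions of the
policies optimal at `p` and at `q` squeezes `G q - G p` between `∇(q) (q - p)` and `∇(p) (q - p)`,
where `∇ = (h ∘ π*, k ∘ π*)`; continuity of `∇` makes the error `o(‖q - p‖)`.
-/

open Topology Asymptotics

section Envelope

variable {E P : Type*}

theorem concaveOn_of_forall_le_of_eq [AddCommGroup E] [Module ℝ E] {s : Set E} {G : E → ℝ}
    {f : P → E → ℝ} (σ : E → P) (hs : Convex ℝ s) (hf : ∀ π, ConcaveOn ℝ s (f π))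
    (hle : ∀ x ∈ s, ∀ π, G x ≤ f π x) (heq : ∀ x ∈ s, G x = f (σ x) x) :
    ConcaveOn ℝ s G := by
  refine ⟨hs, fun x hx y hy a b ha hb hab => ?_⟩
  have hz : a • x + b • y ∈ s := hs hx hy ha hb hab
  calc a • G x + b • G y
      ≤ a • f (σ (a • x + b • y)) x + b • f (σ (a • x + b • y)) y := by
        gcongr <;> exact hle _ ‹_› _
    _ ≤ f (σ (a • x + b • y)) (a • x + b • y) := (hf _).2 hx hy ha hb hab
    _ = G (a • x + b • y) := (heq _ hz).symm

variable [NormedAddCommGroup E] [NormedSpace ℝ E]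

theorem hasFDerivWithinAt_of_sub_le_of_le_sub {s : Set E} {G : E → ℝ} {L : E → E →L[ℝ] ℝ}
    {x : E} (hL : ContinuousWithinAt L s x)
    (hupper : ∀ y ∈ s, G y - G x ≤ L x (y - x))
    (hlower : ∀ y ∈ s, L y (y - x) ≤ G y - G x) :
    HasFDerivWithinAt G (L x) s x := by
  have hbound : ∀ y ∈ s, ‖G y - G x - L x (y - x)‖ ≤ ‖L y - L x‖ * ‖y - x‖ := by
    intro y hy
    have hsub : (L y - L x) (y - x) ≤ G y - G x - L x (y - x) := by
      rw [sub_apply]; linarith [hlower y hy]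
    calc ‖G y - G x - L x (y - x)‖ ≤ ‖(L y - L x) (y - x)‖ := by
          rw [Real.norm_eq_abs, Real.norm_eq_abs, abs_of_nonpos (by linarith [hupper y hy])]
          linarith [neg_abs_le ((L y - L x) (y - x))]
      _ ≤ ‖L y - L x‖ * ‖y - x‖ := (L y - L x).le_opNorm _
  have hsmall : (fun y => ‖L y - L x‖) =o[𝓝[s] x] (fun _ => (1 : ℝ)) := by
    rw [isLittleO_one_iff]
    simpa using (tendsto_sub_nhds_zero_iff.2 hL).norm
  rw [hasFDerivWithinAt_iff_isLittleO, ← isLittleO_norm_right]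
  refine IsBigO.trans_isLittleO (IsBigO.of_bound' ?_)
    (by simpa using hsmall.mul_isBigO (isBigO_refl (fun y => ‖y - x‖) _))
  filter_upwards [self_mem_nhdsWithin] with y hy
  simpa using hbound y hy

theorem hasFDerivWithinAt_of_forall_le_of_eq {s : Set E} {G : E → ℝ} {c : P → ℝ}
    {ℓ : P → E →L[ℝ] ℝ} {σ : E → P} {x : E}
    (hle : ∀ y ∈ s, ∀ π, G y ≤ c π + ℓ π y) (heq : ∀ y ∈ s, G y = c (σ y) + ℓ (σ y) y)
    (hx : x ∈ s) (hcont : ContinuousWithinAt (fun y => ℓ (σ y)) s x) :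
    HasFDerivWithinAt G (ℓ (σ x)) s x :=
  hasFDerivWithinAt_of_sub_le_of_le_sub (L := fun y => ℓ (σ y)) hcont
    (fun y hy => by linarith [hle y hy (σ x), heq x hx, map_sub (ℓ (σ x)) y x])
    (fun y hy => by linarith [hle x hx (σ y), heq y hy, map_sub (ℓ (σ y)) y x])

end Envelope

theorem stmt13_general {P : Type*} (g h k : P → ℝ) (πs : ℝ × ℝ → P)
    (G : ℝ × ℝ → ℝ)
    (hinf : ∀ p ∈ {p : ℝ × ℝ | 0 ≤ p.1 ∧ 0 ≤ p.2},
      ∀ π : P, G p ≤ g π + p.1 * h π + p.2 * k π)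
    (hatt : ∀ p ∈ {p : ℝ × ℝ | 0 ≤ p.1 ∧ 0 ≤ p.2},
      G p = g (πs p) + p.1 * h (πs p) + p.2 * k (πs p))
    (hh : ContinuousOn (fun p => h (πs p)) {p : ℝ × ℝ | 0 ≤ p.1 ∧ 0 ≤ p.2})
    (hk : ContinuousOn (fun p => k (πs p)) {p : ℝ × ℝ | 0 ≤ p.1 ∧ 0 ≤ p.2}) :
    ConcaveOn ℝ {p : ℝ × ℝ | 0 ≤ p.1 ∧ 0 ≤ p.2} G ∧
    (∀ p ∈ {p : ℝ × ℝ | 0 ≤ p.1 ∧ 0 ≤ p.2},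
      HasFDerivWithinAt G
        (h (πs p) • ContinuousLinearMap.fst ℝ ℝ ℝ + k (πs p) • ContinuousLinearMap.snd ℝ ℝ ℝ)
        {p : ℝ × ℝ | 0 ≤ p.1 ∧ 0 ≤ p.2} p) ∧
    ContinuousOn (fun p => (h (πs p), k (πs p))) {p : ℝ × ℝ | 0 ≤ p.1 ∧ 0 ≤ p.2} := by
  set ℓ : P → ℝ × ℝ →L[ℝ] ℝ :=
    fun π => h π • ContinuousLinearMap.fst ℝ ℝ ℝ + k π • ContinuousLinearMap.snd ℝ ℝ ℝ
  have hℓ : ∀ π p, g π + ℓ π p = g π + p.1 * h π + p.2 * k π := fun π p => by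
    simp [ℓ, mul_comm, add_assoc]
  have hquadrant : {p : ℝ × ℝ | 0 ≤ p.1 ∧ 0 ≤ p.2} = Set.Ici 0 := rfl
  have hconvex : Convex ℝ {p : ℝ × ℝ | 0 ≤ p.1 ∧ 0 ≤ p.2} := hquadrant ▸ convex_Ici 0
  simp only [← hℓ] at hinf hatt
  refine ⟨concaveOn_of_forall_le_of_eq πs hconvex
      (fun π => (concaveOn_const _ hconvex).add ((ℓ π : ℝ × ℝ →ₗ[ℝ] ℝ).concaveOn hconvex))
      hinf hatt,
    fun p hp => hasFDerivWithinAt_of_forall_le_of_eq hinf hatt hp ?_, hh.prodMk hk⟩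
  exact ((hh.smul continuousOn_const).add (hk.smul continuousOn_const)) p hp

/-- envelope theorem, Lemma 6: if `G(ξ) = inf_π (g_π + ξ₁ h_π + ξ₂ k_π)`
is attained at `π*(ξ)` on the nonnegative quadrant and the achieved slopes
`h_{π*(·)}, k_{π*(·)}` are continuous, then `G` is concave on the quadrant and
differentiable there with gradient `(h_{π*(ξ)}, k_{π*(ξ)})`; in particular `G` is
continuously differentiable. -/
theorem stmt13 {P : Type*} [Nonempty P] (g h k : P → ℝ) (πs : ℝ × ℝ → P)
    (G : ℝ × ℝ → ℝ)
    (hinf : ∀ p ∈ {p : ℝ × ℝ | 0 ≤ p.1 ∧ 0 ≤ p.2},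
      ∀ π : P, G p ≤ g π + p.1 * h π + p.2 * k π)
    (hatt : ∀ p ∈ {p : ℝ × ℝ | 0 ≤ p.1 ∧ 0 ≤ p.2},
      G p = g (πs p) + p.1 * h (πs p) + p.2 * k (πs p))
    (hh : ContinuousOn (fun p => h (πs p)) {p : ℝ × ℝ | 0 ≤ p.1 ∧ 0 ≤ p.2})
    (hk : ContinuousOn (fun p => k (πs p)) {p : ℝ × ℝ | 0 ≤ p.1 ∧ 0 ≤ p.2}) :
    ConcaveOn ℝ {p : ℝ × ℝ | 0 ≤ p.1 ∧ 0 ≤ p.2} G ∧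
    (∀ p ∈ {p : ℝ × ℝ | 0 ≤ p.1 ∧ 0 ≤ p.2},
      HasFDerivWithinAt G
        (h (πs p) • ContinuousLinearMap.fst ℝ ℝ ℝ + k (πs p) • ContinuousLinearMap.snd ℝ ℝ ℝ)
        {p : ℝ × ℝ | 0 ≤ p.1 ∧ 0 ≤ p.2} p) ∧
    ContinuousOn (fun p => (h (πs p), k (πs p))) {p : ℝ × ℝ | 0 ≤ p.1 ∧ 0 ≤ p.2} :=
  stmt13_general g h k πs G hinf hatt hh hk
end

section
/- Let θ ∈ (0,1) and consider the Bellman equation for the pure as-you-go deployment MDP with states (r, w), A+1 ≤ r ≤ A+B, w ∈ 𝒲 (𝒲 finite), finite power set S, hop cost γ + ξ_out Q_out(r, γ, w) + ξ_relay where Q_out is nondecreasing in r and nonincreasing in w. Then the optimal value function J satisfies: place a relay at state (r, w) (for A+1 ≤ r ≤ A+B−1) if and only if min_{γ ∈ S}(γ + ξ_out Q_out(r, γ, w)) ≤ c_th(r), where c_th(r) = θ·E_W min_γ(γ + ξ_out Q_out(r+1, γ, W)) + (1−θ)·E_W J(r+1, W) − ξ_relay − J(0); moreover c_th(r) is nondecreasing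 in r. -/
/-!
With `c r w = min_γ (γ + ξ_out Q_out(r, γ, w))`, the value `J r w` is the minimum of the cost
of placing a relay now, `c r w + ξ_relay + J 0`, and the continuation value
`θ E c(r+1) + (1 - θ) E J(r+1)`. The placement cost is nondecreasing in `r` because `Q_out` is,
so backward induction from the forced placement at `r = A + B` shows that `J r w` is
nondecreasing in `r`. Hence the continuation value, and with it the threshold `c_th`, is
nondecreasing; the threshold form of the placement rule is a rearrangement of the Bellman
minimum.
-/

open Finset

theorem monotone_inf'_add_mul {α ι : Type*} [Preorder α] {S : Finset ι} (hS : S.Nonempty)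
    (g : ι → ℝ) {Q : α → ι → ℝ} (hQ : ∀ γ, Monotone fun r => Q r γ) {ξ : ℝ} (hξ : 0 ≤ ξ) :
    Monotone fun r => S.inf' hS fun γ => g γ + ξ * Q r γ :=
  fun _ _ hrr' => le_inf' hS _ fun γ hγ =>
    inf'_le_of_le _ hγ (by gcongr; exact hQ γ hrr')

section Bellman

variable {𝒲 : Type*} [Fintype 𝒲] {p : 𝒲 → ℝ} {θ : ℝ}

theorem mix_expect_le_mix_expect (hp : ∀ w, 0 ≤ p w) (hθ0 : 0 ≤ θ) (hθ1 : θ ≤ 1)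
    {f f' g g' : 𝒲 → ℝ} (hf : ∀ w, f w ≤ f' w) (hg : ∀ w, g w ≤ g' w) :
    θ * ∑ w, p w * f w + (1 - θ) * ∑ w, p w * g w ≤
      θ * ∑ w, p w * f' w + (1 - θ) * ∑ w, p w * g' w := by
  have hθ1' : 0 ≤ 1 - θ := sub_nonneg.mpr hθ1
  gcongr with w _ w _
  exacts [hp w, hf w, hp w, hg w]

variable {s c J : ℕ → 𝒲 → ℝ} {a b : ℕ}

theorem bellman_le_succ (hp : ∀ w, 0 ≤ p w) (hθ0 : 0 ≤ θ) (hθ1 : θ ≤ 1)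
    (hs : ∀ w, Monotone fun r => s r w) (hc : ∀ w, Monotone fun r => c r w)
    (hJ : ∀ r, a ≤ r → r < b → ∀ w, J r w = min (s r w)
      (θ * ∑ w', p w' * c (r + 1) w' + (1 - θ) * ∑ w', p w' * J (r + 1) w'))
    (hJb : ∀ w, J b w = s b w) {r : ℕ} (har : a ≤ r) (hrb : r < b) (w : 𝒲) :
    J r w ≤ J (r + 1) w := by
  revert w
  refine Nat.decreasingInduction' (P := fun k => k < b → ∀ w, J k w ≤ J (k + 1) w)
    (fun k hkb hrk ih _ w => ?_) hrb.le (fun h => absurd h (lt_irrefl b)) hrb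
  rw [hJ k (har.trans hrk) hkb w]
  obtain hsucc | hsucc : k + 1 = b ∨ k + 1 < b := by omega
  · rw [hsucc, hJb w]
    exact min_le_of_left_le (hs w hkb.le)
  · rw [hJ (k + 1) (by omega) hsucc w]
    exact min_le_min (hs w k.le_succ)
      (mix_expect_le_mix_expect hp hθ0 hθ1 (fun w' => hc w' (k + 1).le_succ) (ih hsucc))

theorem bellman_monotoneOn (hp : ∀ w, 0 ≤ p w) (hθ0 : 0 ≤ θ) (hθ1 : θ ≤ 1)
    (hs : ∀ w, Monotone fun r => s r w) (hc : ∀ w, Monotone fun r => c r w)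
    (hJ : ∀ r, a ≤ r → r < b → ∀ w, J r w = min (s r w)
      (θ * ∑ w', p w' * c (r + 1) w' + (1 - θ) * ∑ w', p w' * J (r + 1) w'))
    (hJb : ∀ w, J b w = s b w) (w : 𝒲) :
    MonotoneOn (fun r => J r w) (Set.Icc a b) :=
  monotoneOn_of_le_succ Set.ordConnected_Icc fun r _ hr hr1 => by
    rw [Order.succ_eq_add_one] at hr1 ⊢
    exact bellman_le_succ hp hθ0 hθ1 hs hc hJ hJb hr.1 hr1.2 w

end Bellman

theorem stmt18_general {𝒲 : Type*} [Fintype 𝒲]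
    (S : Finset ℝ) (hS : S.Nonempty)
    (A B : ℕ)
    (Qout : ℕ → ℝ → 𝒲 → ℝ)
    (hQr : ∀ γ w, Monotone fun r => Qout r γ w)
    (θ ξo ξr : ℝ) (hθ : θ ∈ Set.Ioo (0 : ℝ) 1) (hξo : 0 ≤ ξo)
    (pW : 𝒲 → ℝ) (hpW : ∀ w, 0 ≤ pW w)
    (J : ℕ → 𝒲 → ℝ) (J0 : ℝ)
    (hBell : ∀ r, A + 1 ≤ r → r ≤ A + B - 1 → ∀ w,
      J r w = min
        ((S.inf' hS fun γ => γ + ξo * Qout r γ w) + ξr + J0)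
        (θ * (∑ w', pW w' * (S.inf' hS fun γ => γ + ξo * Qout (r + 1) γ w')) +
          (1 - θ) * ∑ w', pW w' * J (r + 1) w'))
    (hBellEnd : ∀ w,
      J (A + B) w = (S.inf' hS fun γ => γ + ξo * Qout (A + B) γ w) + ξr + J0) :
    (∀ r, A + 1 ≤ r → r ≤ A + B - 1 → ∀ w,
      (((S.inf' hS fun γ => γ + ξo * Qout r γ w) + ξr + J0 ≤
          θ * (∑ w', pW w' * (S.inf' hS fun γ => γ + ξo * Qout (r + 1) γ w')) +
            (1 - θ) * ∑ w', pW w' * J (r + 1) w')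
        ↔
        (S.inf' hS fun γ => γ + ξo * Qout r γ w) ≤
          θ * (∑ w', pW w' * (S.inf' hS fun γ => γ + ξo * Qout (r + 1) γ w')) +
            (1 - θ) * (∑ w', pW w' * J (r + 1) w') - ξr - J0)) ∧
    (∀ r r', A + 1 ≤ r → r ≤ r' → r' ≤ A + B - 1 →
      θ * (∑ w', pW w' * (S.inf' hS fun γ => γ + ξo * Qout (r + 1) γ w')) +
          (1 - θ) * (∑ w', pW w' * J (r + 1) w') - ξr - J0 ≤
        θ * (∑ w', pW w' * (S.inf' hS fun γ => γ + ξo * Qout (r' + 1) γ w')) +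
          (1 - θ) * (∑ w', pW w' * J (r' + 1) w') - ξr - J0) := by
  obtain ⟨hθ0, hθ1⟩ := hθ
  have hc : ∀ w, Monotone fun r => S.inf' hS fun γ => γ + ξo * Qout r γ w :=
    fun w => monotone_inf'_add_mul hS (fun γ => γ) (fun γ => hQr γ w) hξo
  have hJ : ∀ w, MonotoneOn (fun r => J r w) (Set.Icc (A + 1) (A + B)) :=
    bellman_monotoneOn hpW hθ0.le hθ1.le (fun w => ((hc w).add_const ξr).add_const J0) hc (fun r hr hrb => hBell r hr (by omega)) hBellEnd
  refine ⟨fun r _ _ w => by constructor <;> intro h <;> linarith, fun r r' hr hrr' hr' => ?_⟩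
  have hrr'1 : r + 1 ≤ r' + 1 := Nat.succ_le_succ hrr'
  have := mix_expect_le_mix_expect hpW hθ0.le hθ1.le (fun w => hc w hrr'1)
    (fun w => hJ w ⟨by omega, by omega⟩ ⟨by omega, by omega⟩ hrr'1)
  linarith

/-- Theorem 3, OptAsYouGo threshold structure: in the pure as-you-go
Bellman equation, it is optimal to place a relay at state `(r, w)` (for
`A+1 ≤ r ≤ A+B−1`) if and only if `min_γ (γ + ξ_out Q_out(r,γ,w)) ≤ c_th(r)`, where
`c_th(r) = θ E_W min_γ(γ + ξ_out Q_out(r+1,γ,W)) + (1−θ) E_W J(r+1,W) − ξ_relay − J(0)`;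
moreover `c_th` is nondecreasing in `r`. -/
theorem stmt18 {𝒲 : Type*} [Fintype 𝒲] [Nonempty 𝒲] [LinearOrder 𝒲]
    (S : Finset ℝ) (hS : S.Nonempty) (hSpos : ∀ γ ∈ S, 0 ≤ γ)
    (A B : ℕ) (hB : 1 ≤ B)
    (Qout : ℕ → ℝ → 𝒲 → ℝ)
    (hQr : ∀ γ w, Monotone fun r => Qout r γ w)
    (hQw : ∀ r γ, Antitone fun w => Qout r γ w)
    (hQ01 : ∀ r γ w, Qout r γ w ∈ Set.Icc (0 : ℝ) 1)
    (θ ξo ξr : ℝ) (hθ : θ ∈ Set.Ioo (0 : ℝ) 1) (hξo : 0 ≤ ξo) (hξr : 0 ≤ ξr)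
    (pW : 𝒲 → ℝ) (hpW : ∀ w, 0 ≤ pW w) (hpW1 : ∑ w, pW w = 1)
    (J : ℕ → 𝒲 → ℝ) (J0 : ℝ)
    (hBell : ∀ r, A + 1 ≤ r → r ≤ A + B - 1 → ∀ w,
      J r w = min
        ((S.inf' hS fun γ => γ + ξo * Qout r γ w) + ξr + J0)
        (θ * (∑ w', pW w' * (S.inf' hS fun γ => γ + ξo * Qout (r + 1) γ w')) +
          (1 - θ) * ∑ w', pW w' * J (r + 1) w'))
    (hBellEnd : ∀ w,
      J (A + B) w = (S.inf' hS fun γ => γ + ξo * Qout (A + B) γ w) + ξr + J0)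
    (hBell0 : J0 =
      (∑ k ∈ Finset.Icc 1 (A + 1), (1 - θ) ^ (k - 1) * θ *
        ∑ w', pW w' * (S.inf' hS fun γ => γ + ξo * Qout k γ w')) +
      (1 - θ) ^ (A + 1) * ∑ w', pW w' * J (A + 1) w') :
    (∀ r, A + 1 ≤ r → r ≤ A + B - 1 → ∀ w,
      (((S.inf' hS fun γ => γ + ξo * Qout r γ w) + ξr + J0 ≤
          θ * (∑ w', pW w' * (S.inf' hS fun γ => γ + ξo * Qout (r + 1) γ w')) +
            (1 - θ) * ∑ w', pW w' * J (r + 1) w')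
        ↔
        (S.inf' hS fun γ => γ + ξo * Qout r γ w) ≤
          θ * (∑ w', pW w' * (S.inf' hS fun γ => γ + ξo * Qout (r + 1) γ w')) +
            (1 - θ) * (∑ w', pW w' * J (r + 1) w') - ξr - J0)) ∧
    (∀ r r', A + 1 ≤ r → r ≤ r' → r' ≤ A + B - 1 →
      θ * (∑ w', pW w' * (S.inf' hS fun γ => γ + ξo * Qout (r + 1) γ w')) +
          (1 - θ) * (∑ w', pW w' * J (r + 1) w') - ξr - J0 ≤
        θ * (∑ w', pW w' * (S.inf' hS fun γ => γ + ξo * Qout (r' + 1) γ w')) +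
          (1 - θ) * (∑ w', pW w' * J (r' + 1) w') - ξr - J0) :=
  stmt18_general S hS A B Qout hQr θ ξo ξr hθ hξo pW hpW J J0 hBell hBellEnd
end
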